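/- Assume A, B, D have real entries with A = Aᵀ and D = Dᵀ. Let z ∈ ℂ with |z| = 1, and suppose (z+z⁻¹)·1_M − D, Q(z), Q(z⁻¹), γ(z) and γ(z⁻¹) are all invertible. Then for all indices 1 ≤ u, v ≤ M: (Ψ(z)·Ψ(z)†)_{u v} = ((z² − 1)·γ(z)⁻¹ + (z⁻² − 1)·γ(z⁻¹)⁻¹)_{N+u, N+v}. -/

import Mathlib

/-! With `R = ((w + w⁻¹)·1 − D)⁻¹`, the identity `w⁻¹ Q(w) − w Q(w⁻¹) = (w⁻¹ − w)·1` gives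
`Ψ(w) = (w⁻¹ − w) R B Q(w)⁻¹`. On the unit circle `R` is Hermitian and `Q(w)† = Q(w⁻¹)`, and the
same identity sandwiched between `Q(w)⁻¹` and `Q(w⁻¹)⁻¹` splits `Ψ Ψ†` into multiples of
`R B Q(w)⁻¹ B† R` and `R B Q(w⁻¹)⁻¹ B† R`. On the other side, the Schur complement of the internal
block `−w R⁻¹` of `γ(w)` is `−Q(w)`, so the internal block of `γ(w)⁻¹` is
`−w⁻¹ R − R B Q(w)⁻¹ B† R`; in the combination of `w = z` and `w = z⁻¹` the `R` terms cancel. -/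

open Matrix

/-- `F(z) := A + B† ((z+z⁻¹)·1_M − D)⁻¹ B`. -/
noncomputable def Fmat {N M : ℕ} (A : Matrix (Fin N) (Fin N) ℂ)
    (B : Matrix (Fin M) (Fin N) ℂ) (D : Matrix (Fin M) (Fin M) ℂ) (z : ℂ) :
    Matrix (Fin N) (Fin N) ℂ :=
  A + Bᴴ * ((z + z⁻¹) • (1 : Matrix (Fin M) (Fin M) ℂ) - D)⁻¹ * B

/-- `Q(z) := 1_N − z·F(z)`. -/
noncomputable def Qmat {N M : ℕ} (A : Matrix (Fin N) (Fin N) ℂ)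
    (B : Matrix (Fin M) (Fin N) ℂ) (D : Matrix (Fin M) (Fin M) ℂ) (z : ℂ) :
    Matrix (Fin N) (Fin N) ℂ :=
  1 - z • Fmat A B D z

/-- `𝕊(z) := −Q(z⁻¹)·Q(z)⁻¹`. -/
noncomputable def Smat {N M : ℕ} (A : Matrix (Fin N) (Fin N) ℂ)
    (B : Matrix (Fin M) (Fin N) ℂ) (D : Matrix (Fin M) (Fin M) ℂ) (z : ℂ) :
    Matrix (Fin N) (Fin N) ℂ :=
  -(Qmat A B D z⁻¹) * (Qmat A B D z)⁻¹

/-- `Ψ(z) := ((z+z⁻¹)·1_M − D)⁻¹·B·(z⁻¹·1_N + z·𝕊(z))`. -/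
noncomputable def PsiMat {N M : ℕ} (A : Matrix (Fin N) (Fin N) ℂ)
    (B : Matrix (Fin M) (Fin N) ℂ) (D : Matrix (Fin M) (Fin M) ℂ) (z : ℂ) :
    Matrix (Fin M) (Fin N) ℂ :=
  ((z + z⁻¹) • (1 : Matrix (Fin M) (Fin M) ℂ) - D)⁻¹ * B *
    (z⁻¹ • (1 : Matrix (Fin N) (Fin N) ℂ) + z • Smat A B D z)

/-- `H_G := [[A, B†],[B, D]]`. -/
def HGmat {N M : ℕ} (A : Matrix (Fin N) (Fin N) ℂ)
    (B : Matrix (Fin M) (Fin N) ℂ) (D : Matrix (Fin M) (Fin M) ℂ) :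
    Matrix (Fin N ⊕ Fin M) (Fin N ⊕ Fin M) ℂ :=
  fromBlocks A Bᴴ B D

/-- `P_M`, the diagonal projection onto the last `M` coordinates. -/
def PMmat (N M : ℕ) : Matrix (Fin N ⊕ Fin M) (Fin N ⊕ Fin M) ℂ :=
  fromBlocks 0 0 0 1

/-- `P_N := 1 − P_M`, the diagonal projection onto the first `N` coordinates. -/
def PNmat (N M : ℕ) : Matrix (Fin N ⊕ Fin M) (Fin N ⊕ Fin M) ℂ :=
  1 - PMmat N M

/-- `γ(z) := −z²·P_M + z·H_G − 1`. -/
noncomputable def gammaMat {N M : ℕ} (A : Matrix (Fin N) (Fin N) ℂ)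
    (B : Matrix (Fin M) (Fin N) ℂ) (D : Matrix (Fin M) (Fin M) ℂ) (z : ℂ) :
    Matrix (Fin N ⊕ Fin M) (Fin N ⊕ Fin M) ℂ :=
  -(z ^ 2) • PMmat N M + z • HGmat A B D - 1

theorem Matrix.toBlocks₂₂_inv_fromBlocks {m n α : Type*} [Fintype m] [DecidableEq m]
    [Fintype n] [DecidableEq n] [CommRing α]
    (A : Matrix m m α) (B : Matrix m n α) (C : Matrix n m α) (D : Matrix n n α)
    (hD : IsUnit D) (hS : IsUnit (A - B * D⁻¹ * C)) :
    (fromBlocks A B C D)⁻¹.toBlocks₂₂ =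
      D⁻¹ + D⁻¹ * C * (A - B * D⁻¹ * C)⁻¹ * B * D⁻¹ := by
  let := hD.invertible
  let : Invertible (A - B * ⅟D * C) := by rw [invOf_eq_nonsing_inv]; exact hS.invertible
  let := fromBlocks₂₂Invertible A B C D
  simp only [← invOf_eq_nonsing_inv, invOf_fromBlocks₂₂_eq, toBlocks_fromBlocks₂₂]

theorem Matrix.conjTranspose_eq_transpose_of_im_eq_zero {m n : Type*} {A : Matrix m n ℂ}
    (h : ∀ i j, (A i j).im = 0) : Aᴴ = Aᵀ := by
  ext i j
  exact Complex.conj_eq_iff_im.mpr (h j i)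

section ScatteringGraph

variable {N M : ℕ} (A : Matrix (Fin N) (Fin N) ℂ) (B : Matrix (Fin M) (Fin N) ℂ)
  (D : Matrix (Fin M) (Fin M) ℂ)

noncomputable def Emat (w : ℂ) : Matrix (Fin M) (Fin M) ℂ :=
  (w + w⁻¹) • 1 - D

theorem Emat_inv (w : ℂ) : Emat D w⁻¹ = Emat D w := by
  rw [Emat, Emat, inv_inv, add_comm]

theorem Emat_conjTranspose {w : ℂ} (hD : Dᴴ = D) (hstar : star w = w⁻¹) :
    (Emat D w)ᴴ = Emat D w := by
  rw [Emat, conjTranspose_sub, conjTranspose_smul, conjTranspose_one, hD, star_add, star_inv₀,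
    hstar, inv_inv, add_comm w⁻¹]

theorem Fmat_eq (w : ℂ) : Fmat A B D w = A + Bᴴ * (Emat D w)⁻¹ * B := rfl

theorem Fmat_inv (w : ℂ) : Fmat A B D w⁻¹ = Fmat A B D w := by
  rw [Fmat_eq, Fmat_eq, Emat_inv]

theorem Fmat_conjTranspose {w : ℂ} (hA : Aᴴ = A) (hD : Dᴴ = D) (hstar : star w = w⁻¹) :
    (Fmat A B D w)ᴴ = Fmat A B D w := by
  rw [Fmat_eq, conjTranspose_add, conjTranspose_mul, conjTranspose_mul, conjTranspose_nonsing_inv,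
    Emat_conjTranspose D hD hstar, hA, conjTranspose_conjTranspose, Matrix.mul_assoc]

theorem Qmat_conjTranspose {w : ℂ} (hA : Aᴴ = A) (hD : Dᴴ = D) (hstar : star w = w⁻¹) :
    (Qmat A B D w)ᴴ = Qmat A B D w⁻¹ := by
  rw [Qmat, Qmat, conjTranspose_sub, conjTranspose_one, conjTranspose_smul,
    Fmat_conjTranspose A B D hA hD hstar, Fmat_inv, hstar]

theorem inv_smul_Qmat_sub_smul_Qmat_inv {w : ℂ} (hw : w ≠ 0) :
    w⁻¹ • Qmat A B D w - w • Qmat A B D w⁻¹ = (w⁻¹ - w) • (1 : Matrix (Fin N) (Fin N) ℂ) := by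
  rw [Qmat, Qmat, Fmat_inv, smul_sub, smul_sub, smul_smul, smul_smul, inv_mul_cancel₀ hw,
    mul_inv_cancel₀ hw, sub_smul]
  abel

theorem PsiMat_eq {w : ℂ} (hw : w ≠ 0) (hQ : IsUnit (Qmat A B D w)) :
    PsiMat A B D w = (w⁻¹ - w) • ((Emat D w)⁻¹ * B * (Qmat A B D w)⁻¹) := by
  have hQq : Qmat A B D w * (Qmat A B D w)⁻¹ = 1 :=
    mul_nonsing_inv _ ((isUnit_iff_isUnit_det _).mp hQ)
  have : w⁻¹ • (1 : Matrix (Fin N) (Fin N) ℂ) + w • Smat A B D w =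
      (w⁻¹ - w) • (Qmat A B D w)⁻¹ :=
    calc w⁻¹ • (1 : Matrix (Fin N) (Fin N) ℂ) + w • Smat A B D w
        = (w⁻¹ • Qmat A B D w - w • Qmat A B D w⁻¹) * (Qmat A B D w)⁻¹ := by
          rw [Smat, Matrix.sub_mul, Matrix.smul_mul, Matrix.smul_mul, hQq, Matrix.neg_mul,
            smul_neg, sub_eq_add_neg]
      _ = (w⁻¹ - w) • (Qmat A B D w)⁻¹ := by
          rw [inv_smul_Qmat_sub_smul_Qmat_inv A B D hw, Matrix.smul_mul, Matrix.one_mul]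
  rw [PsiMat, this, Matrix.mul_smul]
  rfl

theorem smul_Qmat_inv_mul_Qmat_inv {w : ℂ} (hw : w ≠ 0) (hQ : IsUnit (Qmat A B D w))
    (hQ' : IsUnit (Qmat A B D w⁻¹)) :
    (w⁻¹ - w) • ((Qmat A B D w)⁻¹ * (Qmat A B D w⁻¹)⁻¹) =
      w⁻¹ • (Qmat A B D w⁻¹)⁻¹ - w • (Qmat A B D w)⁻¹ := by
  have hqQ := nonsing_inv_mul _ ((isUnit_iff_isUnit_det _).mp hQ)
  have hQq' := mul_nonsing_inv _ ((isUnit_iff_isUnit_det _).mp hQ')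
  calc (w⁻¹ - w) • ((Qmat A B D w)⁻¹ * (Qmat A B D w⁻¹)⁻¹)
      = (Qmat A B D w)⁻¹ * ((w⁻¹ - w) • 1) * (Qmat A B D w⁻¹)⁻¹ := by
        rw [Matrix.mul_smul, Matrix.mul_one, Matrix.smul_mul]
    _ = w⁻¹ • (Qmat A B D w⁻¹)⁻¹ - w • (Qmat A B D w)⁻¹ := by
        rw [← inv_smul_Qmat_sub_smul_Qmat_inv A B D hw, Matrix.mul_sub, Matrix.sub_mul,
          Matrix.mul_smul, Matrix.mul_smul, Matrix.smul_mul, Matrix.smul_mul, hqQ, Matrix.one_mul,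
          Matrix.mul_assoc, hQq', Matrix.mul_one]

theorem PsiMat_mul_conjTranspose {w : ℂ} (hA : Aᴴ = A) (hD : Dᴴ = D) (hstar : star w = w⁻¹)
    (hw : w ≠ 0) (hQ : IsUnit (Qmat A B D w)) (hQ' : IsUnit (Qmat A B D w⁻¹)) :
    PsiMat A B D w * (PsiMat A B D w)ᴴ =
      (1 - w ^ 2) • ((Emat D w)⁻¹ * B * (Qmat A B D w)⁻¹ * Bᴴ * (Emat D w)⁻¹) +
        (1 - (w ^ 2)⁻¹) • ((Emat D w)⁻¹ * B * (Qmat A B D w⁻¹)⁻¹ * Bᴴ * (Emat D w)⁻¹) := by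
  have hR : ((Emat D w)⁻¹)ᴴ = (Emat D w)⁻¹ := by
    rw [conjTranspose_nonsing_inv, Emat_conjTranspose D hD hstar]
  have hq : ((Qmat A B D w)⁻¹)ᴴ = (Qmat A B D w⁻¹)⁻¹ := by
    rw [conjTranspose_nonsing_inv, Qmat_conjTranspose A B D hA hD hstar]
  rw [PsiMat_eq A B D hw hQ, conjTranspose_smul, conjTranspose_mul, conjTranspose_mul, hR, hq,
    star_sub, hstar, star_inv₀, hstar, inv_inv, Matrix.smul_mul, Matrix.mul_smul, smul_smul]
  have key := smul_Qmat_inv_mul_Qmat_inv A B D hw hQ hQ'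
  set R := (Emat D w)⁻¹
  set q := (Qmat A B D w)⁻¹
  set q' := (Qmat A B D w⁻¹)⁻¹
  calc ((w⁻¹ - w) * (w - w⁻¹)) • (R * B * q * (q' * (Bᴴ * R)))
      = (w - w⁻¹) • (R * B * ((w⁻¹ - w) • (q * q')) * Bᴴ * R) := by
        simp only [Matrix.mul_smul, Matrix.smul_mul, smul_smul, Matrix.mul_assoc, mul_comm]
    _ = _ := by
        rw [key]
        simp only [Matrix.mul_sub, Matrix.sub_mul, Matrix.mul_smul, Matrix.smul_mul, smul_sub,
          smul_smul, Matrix.mul_assoc]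
        match_scalars <;> field_simp
        ring

theorem gammaMat_eq_fromBlocks {w : ℂ} (hw : w ≠ 0) :
    gammaMat A B D w = fromBlocks (w • A - 1) (w • Bᴴ) (w • B) ((-w) • Emat D w) := by
  rw [gammaMat, PMmat, HGmat, Emat, ← fromBlocks_one, fromBlocks_smul, fromBlocks_smul,
    fromBlocks_add, sub_eq_add_neg, fromBlocks_neg, fromBlocks_add, fromBlocks_inj]
  refine ⟨by module, by module, by module, ?_⟩
  rw [smul_sub, smul_smul, neg_mul, mul_add, mul_inv_cancel₀ hw]
  module

theorem toBlocks₂₂_inv_gammaMat {w : ℂ} (hw : w ≠ 0) (hE : IsUnit (Emat D w))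
    (hQ : IsUnit (Qmat A B D w)) :
    (gammaMat A B D w)⁻¹.toBlocks₂₂ =
      (-w⁻¹) • (Emat D w)⁻¹ - (Emat D w)⁻¹ * B * (Qmat A B D w)⁻¹ * Bᴴ * (Emat D w)⁻¹ := by
  have hEdet := (isUnit_iff_isUnit_det _).mp hE
  have hprod : (-w) • Emat D w * (-w⁻¹) • (Emat D w)⁻¹ = 1 := by
    rw [smul_mul_smul_comm, neg_mul_neg, mul_inv_cancel₀ hw, one_smul, mul_nonsing_inv _ hEdet]
  have hQdet := (isUnit_iff_isUnit_det _).mp hQ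
  have hSchur : w • A - 1 - w • Bᴴ * ((-w) • Emat D w)⁻¹ * (w • B) = -Qmat A B D w := by
    rw [inv_eq_right_inv hprod, Qmat, Fmat_eq]
    simp only [Matrix.smul_mul, Matrix.mul_smul, smul_smul, smul_add]
    rw [show w * (-w⁻¹ * w) = -w by field_simp]
    module
  have hQinv : (-Qmat A B D w)⁻¹ = -(Qmat A B D w)⁻¹ :=
    inv_eq_right_inv (by rw [neg_mul_neg, mul_nonsing_inv _ hQdet])
  rw [gammaMat_eq_fromBlocks A B D hw,
    Matrix.toBlocks₂₂_inv_fromBlocks _ _ _ _ ((isUnit_iff_isUnit_det _).mpr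
      (isUnit_det_of_right_inverse hprod)) (hSchur ▸ hQ.neg),
    hSchur, hQinv, inv_eq_right_inv hprod]
  simp only [Matrix.smul_mul, Matrix.mul_smul, smul_smul, Matrix.mul_neg, Matrix.neg_mul]
  rw [neg_mul, mul_neg, inv_mul_cancel₀ hw, mul_inv_cancel₀ hw]
  module

end ScatteringGraph

theorem PsiPsiDagger_gamma_sum_general {N M : ℕ}
    (A : Matrix (Fin N) (Fin N) ℂ) (B : Matrix (Fin M) (Fin N) ℂ)
    (D : Matrix (Fin M) (Fin M) ℂ)
    (hAre : ∀ i j, (A i j).im = 0)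
    (hDre : ∀ i j, (D i j).im = 0)
    (hAsym : Aᵀ = A) (hDsym : Dᵀ = D)
    (z : ℂ) (habs : ‖z‖ = 1)
    (hD : IsUnit ((z + z⁻¹) • (1 : Matrix (Fin M) (Fin M) ℂ) - D))
    (hQ : IsUnit (Qmat A B D z)) (hQ' : IsUnit (Qmat A B D z⁻¹)) :
    ∀ u v : Fin M,
      (PsiMat A B D z * (PsiMat A B D z)ᴴ) u v =
        ((z ^ 2 - 1) • (gammaMat A B D z)⁻¹ +
            ((z ^ 2)⁻¹ - 1) • (gammaMat A B D z⁻¹)⁻¹)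
          (Sum.inr u) (Sum.inr v) := by
  intro u v
  suffices h : PsiMat A B D z * (PsiMat A B D z)ᴴ =
      (z ^ 2 - 1) • (gammaMat A B D z)⁻¹.toBlocks₂₂ +
        ((z ^ 2)⁻¹ - 1) • (gammaMat A B D z⁻¹)⁻¹.toBlocks₂₂ from congrFun (congrFun h u) v
  have hz : z ≠ 0 := norm_ne_zero_iff.mp (habs ▸ one_ne_zero)
  have hstar : star z = z⁻¹ := (Complex.inv_eq_conj habs).symm
  have hAH : Aᴴ = A := (conjTranspose_eq_transpose_of_im_eq_zero hAre).trans hAsym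
  have hDH : Dᴴ = D := (conjTranspose_eq_transpose_of_im_eq_zero hDre).trans hDsym
  have hD' : IsUnit (Emat D z⁻¹) := by rwa [Emat_inv]
  rw [toBlocks₂₂_inv_gammaMat A B D hz hD hQ,
    toBlocks₂₂_inv_gammaMat A B D (inv_ne_zero hz) hD' hQ', inv_inv, Emat_inv,
    PsiMat_mul_conjTranspose A B D hAH hDH hstar hz hQ hQ']
  match_scalars <;> field_simp <;> ring

/-- for real symmetric data and `|z| = 1`, the internal-vertex matrix
elements of `Ψ(z)·Ψ(z)†` equal those of `(z² − 1)·γ(z)⁻¹ + (z⁻² − 1)·γ(z⁻¹)⁻¹`. -/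
theorem PsiPsiDagger_gamma_sum {N M : ℕ} (hN : 0 < N) (hM : 0 < M)
    (A : Matrix (Fin N) (Fin N) ℂ) (B : Matrix (Fin M) (Fin N) ℂ)
    (D : Matrix (Fin M) (Fin M) ℂ)
    (hAre : ∀ i j, (A i j).im = 0) (hBre : ∀ i j, (B i j).im = 0)
    (hDre : ∀ i j, (D i j).im = 0)
    (hAsym : Aᵀ = A) (hDsym : Dᵀ = D)
    (z : ℂ) (habs : ‖z‖ = 1)
    (hD : IsUnit ((z + z⁻¹) • (1 : Matrix (Fin M) (Fin M) ℂ) - D))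
    (hQ : IsUnit (Qmat A B D z)) (hQ' : IsUnit (Qmat A B D z⁻¹))
    (hγ : IsUnit (gammaMat A B D z)) (hγ' : IsUnit (gammaMat A B D z⁻¹)) :
    ∀ u v : Fin M,
      (PsiMat A B D z * (PsiMat A B D z)ᴴ) u v =
        ((z ^ 2 - 1) • (gammaMat A B D z)⁻¹ +
            ((z ^ 2)⁻¹ - 1) • (gammaMat A B D z⁻¹)⁻¹)
          (Sum.inr u) (Sum.inr v) :=
  PsiPsiDagger_gamma_sum_general A B D hAre hDre hAsym hDsym z habs hD hQ hQ'
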